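/- Let p, c_p be as above, let K ⊂ ℝ^N be compact, and let μ be an analytic functional carried by K. Then for each constant L > 0 there exists C_L > 0 such that |F_p μ(τ, ξ)| ≤ C_L e^{L|ξ|} for all (τ, ξ) ∈ ℝ^N × ℝ^N. -/

import Mathlib

/-!
Write a point of the carrier neighbourhood as `w = x + v` with `x ∈ K` real and `‖v‖ < δ`. The
modulus of the FBI kernel at `w` is `exp (Im (v · ξ) - ‖ξ‖ Re p (τ - x - v))`, and the first term is
at most `δ ‖ξ‖`. The whole point is a uniform lower bound `Re p (u - v) ≥ -ε` for all real `u` and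
all small `v`: for `‖u‖ ≤ 1` it follows from uniform continuity of `p` on a ball, since
`Re p (u) ≥ 0`; for `‖u‖ > 1` homogeneity rescales `u` to the unit sphere, where `Re p ≥ c > 0`
absorbs the perturbation. Taking `δ, ε ≤ L / 2` and applying the carrier estimate on `K_δ` gives
`C_L = c_p C_δ`.
-/

open MeasureTheory Metric Complex Filter

noncomputable section

/-- The canonical embedding of `ℝ^N` into `ℂ^N`. -/
def cV {N : ℕ} (x : EuclideanSpace ℝ (Fin N)) : EuclideanSpace ℂ (Fin N) :=
  WithLp.toLp 2 (fun j => (x j : ℂ))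

/-- The bilinear pairing `z · w = ∑ j, z j * w j` on `ℂ^N`. -/
def dotC {N : ℕ} (z w : EuclideanSpace ℂ (Fin N)) : ℂ := ∑ j, z j * w j

/-- `p` is a homogeneous polynomial of degree `2k` on `ℂ^N` with real coefficients. -/
def IsRealHomog {N : ℕ} (k : ℕ) (p : EuclideanSpace ℂ (Fin N) → ℂ) : Prop :=
  ∃ (a : (Fin N → ℕ) → ℝ) (S : Finset (Fin N → ℕ)),
    (∀ α ∈ S, ∑ j, α j = 2 * k) ∧
    ∀ z : EuclideanSpace ℂ (Fin N), p z = ∑ α ∈ S, (a α : ℂ) * ∏ j, z j ^ α j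

lemma cV_sub {N : ℕ} (x y : EuclideanSpace ℝ (Fin N)) : cV (x - y) = cV x - cV y := by
  ext j; simp [cV]

lemma cV_smul {N : ℕ} (r : ℝ) (x : EuclideanSpace ℝ (Fin N)) : cV (r • x) = (r : ℂ) • cV x := by
  ext j; simp [cV]

lemma norm_cV {N : ℕ} (x : EuclideanSpace ℝ (Fin N)) : ‖cV x‖ = ‖x‖ := by
  simp [EuclideanSpace.norm_eq, cV]

lemma dotC_sub_left {N : ℕ} (z z' w : EuclideanSpace ℂ (Fin N)) :
    dotC (z - z') w = dotC z w - dotC z' w := by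
  simp [dotC, sub_mul]

lemma im_dotC_cV_cV {N : ℕ} (x y : EuclideanSpace ℝ (Fin N)) : (dotC (cV x) (cV y)).im = 0 := by
  simp [dotC, cV, Complex.im_sum]

lemma norm_dotC_cV_le {N : ℕ} (z : EuclideanSpace ℂ (Fin N)) (y : EuclideanSpace ℝ (Fin N)) :
    ‖dotC z (cV y)‖ ≤ ‖z‖ * ‖y‖ := by
  have h : dotC z (cV y) = (starRingEnd ℂ) (inner ℂ z (cV y)) := by
    simp [dotC, PiLp.inner_apply, cV, mul_comm]
  rw [h, RCLike.norm_conj, ← norm_cV y]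
  exact norm_inner_le_norm z (cV y)

namespace IsRealHomog

variable {N k : ℕ} {p : EuclideanSpace ℂ (Fin N) → ℂ}

lemma differentiable (hp : IsRealHomog k p) : Differentiable ℂ p := by
  obtain ⟨a, S, -, hrep⟩ := hp
  rw [funext hrep]
  fun_prop

lemma map_smul (hp : IsRealHomog k p) (s : ℂ) (z : EuclideanSpace ℂ (Fin N)) :
    p (s • z) = s ^ (2 * k) * p z := by
  obtain ⟨a, S, hdeg, hrep⟩ := hp
  have hmono : ∀ α ∈ S, ∏ j, (s • z) j ^ α j = s ^ (2 * k) * ∏ j, z j ^ α j := fun α hα => by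
    simp only [PiLp.smul_apply, smul_eq_mul, mul_pow, Finset.prod_mul_distrib,
      Finset.prod_pow_eq_pow_sum, hdeg α hα]
  rw [hrep, hrep, Finset.mul_sum]
  exact Finset.sum_congr rfl fun α hα => by rw [hmono α hα]; ring

end IsRealHomog

lemma exists_pos_forall_re_sub_le_re_apply_cV_sub {N : ℕ} {p : EuclideanSpace ℂ (Fin N) → ℂ}
    {ε : ℝ} (hcont : Continuous p) (hε : 0 < ε) :
    ∃ δ > 0, ∀ x v, ‖x‖ ≤ 1 → ‖v‖ < δ → (p (cV x)).re - ε ≤ (p (cV x - v)).re := by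
  obtain ⟨δ, hδ, hunif⟩ := Metric.uniformContinuousOn_iff.mp
    ((isCompact_closedBall (0 : EuclideanSpace ℂ (Fin N)) 2).uniformContinuousOn_of_continuous
      hcont.continuousOn) ε hε
  refine ⟨min δ 1, lt_min hδ one_pos, fun x v hx hv => ?_⟩
  have hv1 : ‖v‖ < 1 := hv.trans_le (min_le_right _ _)
  have hx' : cV x ∈ closedBall 0 2 := by
    rw [mem_closedBall_zero_iff, norm_cV]; linarith
  have hxv : cV x - v ∈ closedBall 0 2 := by
    rw [mem_closedBall_zero_iff]
    linarith [norm_sub_le (cV x) v, norm_cV x]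
  have hdist : dist (cV x - v) (cV x) < δ := by
    rw [dist_eq_norm, sub_sub_cancel_left, norm_neg]
    exact hv.trans_le (min_le_left _ _)
  have hclose := hunif _ hxv _ hx' hdist
  rw [dist_eq_norm] at hclose
  have hre := (abs_le.mp ((abs_re_le_norm _).trans hclose.le)).1
  rw [sub_re] at hre
  linarith

lemma exists_pos_forall_neg_le_re_apply_cV_sub {N d : ℕ} {p : EuclideanSpace ℂ (Fin N) → ℂ}
    {c ε : ℝ} (hcont : Continuous p) (hhom : ∀ (s : ℂ) z, p (s • z) = s ^ d * p z)
    (hc : 0 < c) (hlow : ∀ x, c * ‖x‖ ^ d ≤ (p (cV x)).re) (hε : 0 < ε) :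
    ∃ δ > 0, ∀ x v, ‖v‖ < δ → -ε ≤ (p (cV x - v)).re := by
  obtain ⟨δ, hδ, hnear⟩ :=
    exists_pos_forall_re_sub_le_re_apply_cV_sub hcont (lt_min hε hc : 0 < min ε c)
  refine ⟨δ, hδ, fun x v hv => ?_⟩
  rcases le_or_gt ‖x‖ 1 with hx | hx
  · linarith [hnear x v hx hv, hlow x, mul_nonneg hc.le (pow_nonneg (norm_nonneg x) d),
      min_le_left ε c]
  · set s := ‖x‖
    have hs : 0 < s := one_pos.trans hx
    have hscale : cV x - v = (s : ℂ) • (cV (s⁻¹ • x) - (s⁻¹ : ℂ) • v) := by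
      rw [smul_sub, cV_smul, smul_smul, smul_smul, ← ofReal_mul, ← ofReal_inv, ← ofReal_mul,
        mul_inv_cancel₀ hs.ne', ofReal_one, one_smul, one_smul]
    have hunit : ‖s⁻¹ • x‖ = 1 := norm_smul_inv_norm (norm_pos_iff.mp hs)
    have hv' : ‖(s⁻¹ : ℂ) • v‖ < δ := by
      rw [norm_smul, norm_inv, norm_real, Real.norm_of_nonneg hs.le]
      exact (mul_le_of_le_one_left (norm_nonneg v) (inv_le_one_of_one_le₀ hx.le)).trans_lt hv
    have hpos : 0 ≤ (p (cV (s⁻¹ • x) - (s⁻¹ : ℂ) • v)).re := by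
      have hsphere := hlow (s⁻¹ • x)
      rw [hunit, one_pow, mul_one] at hsphere
      linarith [hnear _ _ hunit.le hv', min_le_right ε c]
    rw [hscale, hhom, ← ofReal_pow, re_ofReal_mul]
    linarith [mul_nonneg (pow_nonneg hs.le d) hpos]

def fbiKernel {N : ℕ} (p : EuclideanSpace ℂ (Fin N) → ℂ) (τ ξ : EuclideanSpace ℝ (Fin N)) :
    EuclideanSpace ℂ (Fin N) → ℂ :=
  fun w => Complex.exp (Complex.I * dotC (cV τ - w) (cV ξ) - (‖ξ‖ : ℂ) * p (cV τ - w))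

section fbiKernel

variable {N : ℕ} {p : EuclideanSpace ℂ (Fin N) → ℂ} (τ ξ : EuclideanSpace ℝ (Fin N))

lemma differentiable_fbiKernel (hp : Differentiable ℂ p) : Differentiable ℂ (fbiKernel p τ ξ) := by
  unfold fbiKernel dotC
  fun_prop

lemma norm_fbiKernel_le {δ ε : ℝ} (hpε : ∀ x v, ‖v‖ < δ → -ε ≤ (p (cV x - v)).re)
    {w : EuclideanSpace ℂ (Fin N)} (hw : w ∈ thickening δ (Set.range cV)) :
    ‖fbiKernel p τ ξ w‖ ≤ Real.exp ((δ + ε) * ‖ξ‖) := by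
  obtain ⟨_, ⟨x, rfl⟩, hdist⟩ := mem_thickening_iff.mp hw
  set v := w - cV x
  have hv : ‖v‖ < δ := by rwa [dist_eq_norm] at hdist
  have hsplit : cV τ - w = cV (τ - x) - v := by rw [cV_sub, sub_sub, add_sub_cancel]
  have him : -(dotC (cV τ - w) (cV ξ)).im ≤ δ * ‖ξ‖ := by
    rw [hsplit, dotC_sub_left, sub_im, im_dotC_cV_cV, zero_sub, neg_neg]
    calc (dotC v (cV ξ)).im ≤ ‖dotC v (cV ξ)‖ := im_le_norm _
      _ ≤ ‖v‖ * ‖ξ‖ := norm_dotC_cV_le v ξ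
      _ ≤ δ * ‖ξ‖ := by gcongr
  have hre := hpε (τ - x) v hv
  rw [← hsplit] at hre
  rw [fbiKernel, norm_exp, Real.exp_le_exp, sub_re, re_ofReal_mul, I_mul_re]
  nlinarith [norm_nonneg ξ]

end fbiKernel

theorem stmt7_general (N k : ℕ)
    (p : EuclideanSpace ℂ (Fin N) → ℂ) (hp : IsRealHomog k p)
    (c : ℝ) (hc : 0 < c)
    (hlow : ∀ x : EuclideanSpace ℝ (Fin N), c * ‖x‖ ^ (2 * k) ≤ (p (cV x)).re)
    (cp : ℝ) (hcp : 0 < cp)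
    (K : Set (EuclideanSpace ℝ (Fin N)))
    (μ : (EuclideanSpace ℂ (Fin N) → ℂ) →ₗ[ℂ] ℂ)
    (hμ : ∀ δ > (0 : ℝ), ∃ Cδ > (0 : ℝ), ∀ h : EuclideanSpace ℂ (Fin N) → ℂ,
      Differentiable ℂ h →
        ‖μ h‖ ≤ Cδ * sSup ((fun z => ‖h z‖) '' Metric.thickening δ (cV '' K))) :
    ∀ L > (0 : ℝ), ∃ CL > (0 : ℝ), ∀ τ ξ : EuclideanSpace ℝ (Fin N),
      ‖(cp : ℂ) * μ (fun w => Complex.exp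
          (Complex.I * dotC (cV τ - w) (cV ξ) - (‖ξ‖ : ℂ) * p (cV τ - w)))‖ ≤
        CL * Real.exp (L * ‖ξ‖) := by
  intro L hL
  obtain ⟨δ, hδ, hpδ⟩ := exists_pos_forall_neg_le_re_apply_cV_sub hp.differentiable.continuous
    hp.map_smul hc hlow (half_pos hL)
  set δ' := min δ (L / 2)
  have hkernel : ∀ τ ξ, ∀ w ∈ thickening δ' (cV '' K),
      ‖fbiKernel p τ ξ w‖ ≤ Real.exp (L * ‖ξ‖) := fun τ ξ w hw => by
    have hpδ' : ∀ x v, ‖v‖ < δ' → -(L / 2) ≤ (p (cV x - v)).re :=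
      fun x v hv => hpδ x v (hv.trans_le (min_le_left _ _))
    refine (norm_fbiKernel_le τ ξ hpδ'
      (thickening_subset_of_subset δ' (Set.image_subset_range cV K) hw)).trans ?_
    exact Real.exp_le_exp.mpr
      (mul_le_mul_of_nonneg_right (by linarith [min_le_right δ (L / 2)]) (norm_nonneg ξ))
  obtain ⟨Cδ, hCδ, hμδ⟩ := hμ δ' (lt_min hδ (half_pos hL))
  refine ⟨cp * Cδ, mul_pos hcp hCδ, fun τ ξ => ?_⟩
  have hsup : sSup ((fun w => ‖fbiKernel p τ ξ w‖) '' thickening δ' (cV '' K)) ≤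
      Real.exp (L * ‖ξ‖) :=
    Real.sSup_le (by rintro _ ⟨w, hw, rfl⟩; exact hkernel τ ξ w hw) (Real.exp_pos _).le
  show ‖(cp : ℂ) * μ (fbiKernel p τ ξ)‖ ≤ _
  calc ‖(cp : ℂ) * μ (fbiKernel p τ ξ)‖ = cp * ‖μ (fbiKernel p τ ξ)‖ := by
        rw [norm_mul, norm_real, Real.norm_of_nonneg hcp.le]
    _ ≤ cp * (Cδ * Real.exp (L * ‖ξ‖)) := by
        gcongr
        exact (hμδ _ (differentiable_fbiKernel τ ξ hp.differentiable)).trans (by gcongr)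
    _ = cp * Cδ * Real.exp (L * ‖ξ‖) := by ring

/-- Global a priori bound for the FBI transform of an analytic functional
carried by a compact set `K ⊂ ℝ^N`: for every `L > 0` there is `C_L > 0` with
`|F_p μ(τ,ξ)| ≤ C_L e^{L|ξ|}` on `ℝ^N × ℝ^N`. -/
theorem stmt7 (N k : ℕ) (hN : 1 ≤ N) (hk : 1 ≤ k)
    (p : EuclideanSpace ℂ (Fin N) → ℂ) (hp : IsRealHomog k p)
    (c C : ℝ) (hc : 0 < c) (hC : 0 < C)
    (hlow : ∀ x : EuclideanSpace ℝ (Fin N), c * ‖x‖ ^ (2 * k) ≤ (p (cV x)).re)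
    (hupp : ∀ x : EuclideanSpace ℝ (Fin N), (p (cV x)).re ≤ C * ‖x‖ ^ (2 * k))
    (cp : ℝ) (hcp : 0 < cp)
    (hcpdef : cp⁻¹ = ∫ x : EuclideanSpace ℝ (Fin N), Real.exp (-(p (cV x)).re))
    (K : Set (EuclideanSpace ℝ (Fin N))) (hK : IsCompact K)
    (μ : (EuclideanSpace ℂ (Fin N) → ℂ) →ₗ[ℂ] ℂ)
    (hμ : ∀ δ > (0 : ℝ), ∃ Cδ > (0 : ℝ), ∀ h : EuclideanSpace ℂ (Fin N) → ℂ,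
      Differentiable ℂ h →
        ‖μ h‖ ≤ Cδ * sSup ((fun z => ‖h z‖) '' Metric.thickening δ (cV '' K))) :
    ∀ L > (0 : ℝ), ∃ CL > (0 : ℝ), ∀ τ ξ : EuclideanSpace ℝ (Fin N),
      ‖(cp : ℂ) * μ (fun w => Complex.exp
          (Complex.I * dotC (cV τ - w) (cV ξ) - (‖ξ‖ : ℂ) * p (cV τ - w)))‖ ≤
        CL * Real.exp (L * ‖ξ‖) :=
  stmt7_general N k p hp c hc hlow cp hcp K μ hμ

end
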